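/- For all α₁, c, α₂ > 0, the Shannon entropy of the McKay bivariate density satisfies -∫₀^∞ ∫ₓ^∞ m(x, y) log m(x, y) dy dx = (α₁ + α₂) + log(Γ(α₁) Γ(α₂) / c²) - (α₁ - 1)ψ(α₁) - (α₂ - 1)ψ(α₂). -/

import Mathlib

/-- The McKay bivariate gamma density with parameters `α₁ c α₂`, on `0 < x < y`. -/
noncomputable def mckayPDF (α₁ c α₂ : ℝ) (x y : ℝ) : ℝ :=
  c ^ (α₁ + α₂) * x ^ (α₁ - 1) * (y - x) ^ (α₂ - 1) * Real.exp (-(c * y)) /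
    (Real.Gamma α₁ * Real.Gamma α₂)


/-- The digamma function `ψ = Γ'/Γ`. -/
noncomputable def digamma (x : ℝ) : ℝ := deriv Real.Gamma x / Real.Gamma x

/-!
Under the shear `(x, y) ↦ (x, y - x)`, which preserves Lebesgue measure, the McKay density
becomes the product of the gamma densities with shapes `α₁`, `α₂` and common rate `c`. Since
`-ab log (ab) = -(a log a) b - a (b log b)`, the entropy of a product of probability densities is
the sum of their entropies, and the entropy of the gamma law with shape `a` and rate `r` is
`a - log r + log Γ(a) + (1 - a) ψ(a)`. Its one non-elementary ingredient is
`∫ t ^ (a - 1) log t e^{-t} dt = Γ'(a)`, obtained by differentiating Euler's integral under the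
integral sign.
-/

open MeasureTheory Set Real ProbabilityTheory Asymptotics Filter Topology

namespace Real

theorem hasDerivAt_Gamma_integral {s : ℝ} (hs : 0 < s) :
    HasDerivAt Gamma (∫ t in Ioi 0, t ^ (s - 1) * (log t * exp (-t))) s := by
  have hs' : 0 < (s : ℂ).re := by simpa using hs
  have hℂ := (Complex.hasDerivAt_GammaIntegral hs').congr_of_eventuallyEq <| by
    filter_upwards [(isOpen_lt continuous_const Complex.continuous_re).mem_nhds hs']
      with z hz using Complex.Gamma_eq_integral hz
  have hint : ∫ t : ℝ in Ioi 0, (t : ℂ) ^ ((s : ℂ) - 1) * (log t * exp (-t)) =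
      ((∫ t in Ioi 0, t ^ (s - 1) * (log t * exp (-t)) : ℝ) : ℂ) := by
    rw [← integral_complex_ofReal]
    refine setIntegral_congr_fun measurableSet_Ioi fun t ht => ?_
    simp [Complex.ofReal_cpow (le_of_lt ht)]
  rw [hint] at hℂ
  simpa [Complex.Gamma_ofReal] using hℂ.real_of_complex

theorem integrableOn_rpow_mul_log_mul_exp_neg_mul {a r : ℝ} (ha : 0 < a) (hr : 0 < r) :
    IntegrableOn (fun t => t ^ (a - 1) * (log t * exp (-(r * t)))) (Ioi 0) := by
  have hcont : Continuous fun t => exp (-(r * t)) := by fun_prop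
  have htop : (fun t => exp (-(r * t))) =O[atTop] (· ^ (-(a + 2))) := by
    simpa only [neg_mul] using (isLittleO_exp_neg_mul_rpow_atTop hr _).isBigO
  have hbot : (fun t => exp (-(r * t))) =O[𝓝[>] 0] (· ^ (-(0 : ℝ))) := by
    simp only [neg_zero, rpow_zero]
    exact hcont.continuousWithinAt.tendsto.isBigO_one ℝ
  exact mellin_convergent_of_isBigO_scalar
    (((continuousOn_log.mono fun _ ht => ne_of_gt ht).mul hcont.continuousOn).locallyIntegrableOn
      measurableSet_Ioi)
    (isBigO_rpow_top_log_smul (by linarith : a + 1 < a + 2) htop) (by linarith)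
    (isBigO_rpow_zero_log_smul (by linarith : (0 : ℝ) < a / 2) hbot) (by linarith)

theorem integrableOn_rpow_mul_exp_neg_mul {a r : ℝ} (ha : 0 < a) (hr : 0 < r) :
    IntegrableOn (fun t => t ^ (a - 1) * exp (-(r * t))) (Ioi 0) := by
  simpa only [rpow_one, neg_mul] using
    integrableOn_rpow_mul_exp_neg_mul_rpow (by linarith : -1 < a - 1) one_pos hr

theorem integral_rpow_mul_log_mul_exp_neg_mul_Ioi {a r : ℝ} (ha : 0 < a) (hr : 0 < r) :
    ∫ t in Ioi 0, t ^ (a - 1) * (log t * exp (-(r * t))) =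
      (1 / r) ^ a * (deriv Gamma a - Gamma a * log r) := by
  have hsub :=
    integral_comp_mul_left_Ioi (fun u => u ^ (a - 1) * ((log u - log r) * exp (-u))) 0 hr
  have hlhs : ∫ t in Ioi 0, (r * t) ^ (a - 1) * ((log (r * t) - log r) * exp (-(r * t))) =
      r ^ (a - 1) * ∫ t in Ioi 0, t ^ (a - 1) * (log t * exp (-(r * t))) := by
    rw [← integral_const_mul]
    refine setIntegral_congr_fun measurableSet_Ioi fun t (ht : 0 < t) => ?_
    rw [mul_rpow hr.le ht.le, log_mul hr.ne' ht.ne']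
    ring
  have hrhs : ∫ u in Ioi 0, u ^ (a - 1) * ((log u - log r) * exp (-u)) =
      deriv Gamma a - Gamma a * log r := by
    have hlog := integrableOn_rpow_mul_log_mul_exp_neg_mul ha one_pos
    have hpow := integrableOn_rpow_mul_exp_neg_mul ha one_pos
    have hΓ := integral_rpow_mul_exp_neg_mul_Ioi ha one_pos
    simp only [one_mul, div_one, one_rpow] at hlog hpow hΓ
    simp only [mul_sub, sub_mul, ← mul_assoc _ (log r), mul_comm _ (log r), mul_assoc (log r)]
    rw [integral_sub hlog (hpow.const_mul _), integral_const_mul, hΓ,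
      (hasDerivAt_Gamma_integral ha).deriv]
  simp only [mul_zero, smul_eq_mul] at hsub
  rw [hlhs, hrhs] at hsub
  have hra : r ^ a = r ^ (a - 1) * r := by rw [← rpow_add_one hr.ne']; ring_nf
  set I := ∫ t in Ioi 0, t ^ (a - 1) * (log t * exp (-(r * t)))
  rw [div_rpow zero_le_one hr.le, one_rpow, hra]
  field_simp at hsub ⊢
  linear_combination hsub

end Real

namespace ProbabilityTheory

theorem gammaPDFReal_of_pos {a r t : ℝ} (ht : 0 < t) :
    gammaPDFReal a r t = r ^ a / Gamma a * (t ^ (a - 1) * exp (-(r * t))) := by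
  rw [gammaPDFReal, if_pos ht.le, mul_assoc]

theorem integrableOn_gammaPDFReal {a r : ℝ} (ha : 0 < a) (hr : 0 < r) :
    IntegrableOn (gammaPDFReal a r) (Ioi 0) :=
  IntegrableOn.congr_fun ((integrableOn_rpow_mul_exp_neg_mul ha hr).const_mul _)
    (fun _ ht => (gammaPDFReal_of_pos ht).symm) measurableSet_Ioi

theorem integral_gammaPDFReal_Ioi {a r : ℝ} (ha : 0 < a) (hr : 0 < r) :
    ∫ t in Ioi 0, gammaPDFReal a r t = 1 := by
  rw [setIntegral_congr_fun measurableSet_Ioi fun _ ht => gammaPDFReal_of_pos ht,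
    integral_const_mul, integral_rpow_mul_exp_neg_mul_Ioi ha hr, div_rpow zero_le_one hr.le,
    one_rpow]
  have := (Gamma_pos_of_pos ha).ne'
  have := (rpow_pos_of_pos hr a).ne'
  field_simp

theorem negMulLog_gammaPDFReal_of_pos {a r t : ℝ} (ha : 0 < a) (hr : 0 < r) (ht : 0 < t) :
    negMulLog (gammaPDFReal a r t) =
      r ^ a / Gamma a * (r * (t ^ (a + 1 - 1) * exp (-(r * t))) -
        (a - 1) * (t ^ (a - 1) * (log t * exp (-(r * t)))) -
        log (r ^ a / Gamma a) * (t ^ (a - 1) * exp (-(r * t)))) := by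
  have hC : 0 < r ^ a / Gamma a := div_pos (rpow_pos_of_pos hr a) (Gamma_pos_of_pos ha)
  rw [gammaPDFReal_of_pos ht, negMulLog, log_mul hC.ne' (by positivity),
    log_mul (rpow_pos_of_pos ht _).ne' (exp_pos _).ne', log_rpow ht, log_exp,
    show a + 1 - 1 = a - 1 + 1 by ring, rpow_add_one ht.ne']
  ring

theorem integrableOn_negMulLog_gammaPDFReal {a r : ℝ} (ha : 0 < a) (hr : 0 < r) :
    IntegrableOn (fun t => negMulLog (gammaPDFReal a r t)) (Ioi 0) := by
  have hpow := integrableOn_rpow_mul_exp_neg_mul ha hr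
  have hpow' := integrableOn_rpow_mul_exp_neg_mul (by linarith : 0 < a + 1) hr
  have hlog := integrableOn_rpow_mul_log_mul_exp_neg_mul ha hr
  exact IntegrableOn.congr_fun
    ((((hpow'.const_mul _).sub (hlog.const_mul _)).sub (hpow.const_mul _)).const_mul _)
    (fun _ ht => (negMulLog_gammaPDFReal_of_pos ha hr ht).symm) measurableSet_Ioi

theorem integral_negMulLog_gammaPDFReal {a r : ℝ} (ha : 0 < a) (hr : 0 < r) :
    ∫ t in Ioi 0, negMulLog (gammaPDFReal a r t) =
      a - log r + log (Gamma a) + (1 - a) * digamma a := by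
  have hpow := integrableOn_rpow_mul_exp_neg_mul ha hr
  have hpow' := integrableOn_rpow_mul_exp_neg_mul (by linarith : 0 < a + 1) hr
  have hlog := integrableOn_rpow_mul_log_mul_exp_neg_mul ha hr
  have hdiff : IntegrableOn (fun t => r * (t ^ (a + 1 - 1) * exp (-(r * t))) -
      (a - 1) * (t ^ (a - 1) * (log t * exp (-(r * t))))) (Ioi 0) :=
    (hpow'.const_mul _).sub (hlog.const_mul _)
  rw [setIntegral_congr_fun measurableSet_Ioi fun _ ht => negMulLog_gammaPDFReal_of_pos ha hr ht,
    integral_const_mul, integral_sub hdiff (hpow.const_mul _),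
    integral_sub (hpow'.const_mul _) (hlog.const_mul _),
    integral_const_mul, integral_const_mul, integral_const_mul,
    integral_rpow_mul_exp_neg_mul_Ioi (by linarith) hr, integral_rpow_mul_exp_neg_mul_Ioi ha hr,
    integral_rpow_mul_log_mul_exp_neg_mul_Ioi ha hr, Gamma_add_one ha.ne',
    log_div (rpow_pos_of_pos hr a).ne' (Gamma_pos_of_pos ha).ne', log_rpow hr, digamma,
    div_rpow zero_le_one hr.le, div_rpow zero_le_one hr.le, one_rpow, one_rpow, rpow_add_one hr.ne']
  have := (Gamma_pos_of_pos ha).ne'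
  have := (rpow_pos_of_pos hr a).ne'
  field_simp
  ring

end ProbabilityTheory

theorem integral_comp_add_left_Ioi (f : ℝ → ℝ) (a d : ℝ) :
    ∫ x in Ioi a, f (d + x) = ∫ x in Ioi (d + a), f x := by
  rw [← integral_indicator measurableSet_Ioi, ← integral_indicator measurableSet_Ioi,
    ← integral_add_left_eq_self ((Ioi (d + a)).indicator f) d]
  congr 1 with x
  simp [indicator_apply]

theorem integral_integral_negMulLog_mul {α β : Type*} [MeasurableSpace α] [MeasurableSpace β]
    {μ : Measure α} {ν : Measure β} {f : α → ℝ} {g : β → ℝ} (hf : Integrable f μ)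
    (hfl : Integrable (fun x => negMulLog (f x)) μ) (hg : Integrable g ν)
    (hgl : Integrable (fun y => negMulLog (g y)) ν) :
    ∫ x, ∫ y, negMulLog (f x * g y) ∂ν ∂μ =
      (∫ x, negMulLog (f x) ∂μ) * (∫ y, g y ∂ν) + (∫ x, f x ∂μ) * ∫ y, negMulLog (g y) ∂ν := by
  simp only [negMulLog_mul]
  simp only [integral_add (hg.mul_const _) (hgl.const_mul _), integral_mul_const,
    integral_const_mul]
  rw [integral_add (hfl.const_mul _) (hf.mul_const _), integral_const_mul, integral_mul_const]
  ring

theorem mckayPDF_add_eq_gammaPDFReal_mul {α₁ c α₂ x v : ℝ} (hc : 0 < c) (hx : 0 ≤ x)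
    (hv : 0 ≤ v) :
    mckayPDF α₁ c α₂ x (x + v) = gammaPDFReal α₁ c x * gammaPDFReal α₂ c v := by
  rw [mckayPDF, gammaPDFReal, gammaPDFReal, if_pos hx, if_pos hv, add_sub_cancel_left,
    rpow_add hc, mul_add, neg_add, exp_add]
  ring

theorem mckay_entropy (α₁ c α₂ : ℝ) (h₁ : 0 < α₁) (hc : 0 < c) (h₂ : 0 < α₂) :
    -∫ x in Set.Ioi (0 : ℝ), ∫ y in Set.Ioi x,
        mckayPDF α₁ c α₂ x y * Real.log (mckayPDF α₁ c α₂ x y) =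
      (α₁ + α₂) + Real.log (Real.Gamma α₁ * Real.Gamma α₂ / c ^ 2) -
        (α₁ - 1) * digamma α₁ - (α₂ - 1) * digamma α₂ := by
  have hshear : ∀ x ∈ Ioi (0 : ℝ), ∫ y in Ioi x, negMulLog (mckayPDF α₁ c α₂ x y) =
      ∫ v in Ioi 0, negMulLog (gammaPDFReal α₁ c x * gammaPDFReal α₂ c v) := by
    intro x (hx : 0 < x)
    rw [← add_zero x, ← integral_comp_add_left_Ioi, add_zero]
    exact setIntegral_congr_fun measurableSet_Ioi fun v (hv : 0 < v) => by
      rw [mckayPDF_add_eq_gammaPDFReal_mul hc hx.le hv.le]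
  calc -∫ x in Ioi 0, ∫ y in Ioi x, mckayPDF α₁ c α₂ x y * log (mckayPDF α₁ c α₂ x y)
      = ∫ x in Ioi 0, ∫ y in Ioi x, negMulLog (mckayPDF α₁ c α₂ x y) := by
        simp only [negMulLog_eq_neg, integral_neg]
    _ = ∫ x in Ioi 0, ∫ v in Ioi 0, negMulLog (gammaPDFReal α₁ c x * gammaPDFReal α₂ c v) :=
        setIntegral_congr_fun measurableSet_Ioi hshear
    _ = (α₁ - log c + log (Gamma α₁) + (1 - α₁) * digamma α₁) +
          (α₂ - log c + log (Gamma α₂) + (1 - α₂) * digamma α₂) := by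
        rw [integral_integral_negMulLog_mul (integrableOn_gammaPDFReal h₁ hc)
          (integrableOn_negMulLog_gammaPDFReal h₁ hc) (integrableOn_gammaPDFReal h₂ hc)
          (integrableOn_negMulLog_gammaPDFReal h₂ hc), integral_gammaPDFReal_Ioi h₁ hc,
          integral_gammaPDFReal_Ioi h₂ hc, integral_negMulLog_gammaPDFReal h₁ hc,
          integral_negMulLog_gammaPDFReal h₂ hc]
        ring
    _ = _ := by
        rw [log_div (mul_pos (Gamma_pos_of_pos h₁) (Gamma_pos_of_pos h₂)).ne'
          (pow_ne_zero 2 hc.ne'), log_mul (Gamma_pos_of_pos h₁).ne' (Gamma_pos_of_pos h₂).ne',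
          log_pow]
        push_cast
        ring
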